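/- (Containment of function classes from Proposition 2.) Fix an architecture (d_0, d_1, …, d_H). For every choice of affine layers l_h(x) = W^h x + b^h (W^h a real d_h × d_{h−1} matrix, b^h ∈ ℝ^{d_h}), there exist quadratic layers q_1, …, q_H such that q_H ∘ q_{H−1} ∘ ⋯ ∘ q_1 = l_H ∘ σ_1 ∘ l_{H−1} ∘ σ_1 ∘ ⋯ ∘ σ_1 ∘ l_1 as functions ℝ^{d_0} → ℝ^{d_H}, where σ_1 is the componentwise squaring map σ_1(z) = z². In other words, every function computed by a conventional network with quadratic activation is computed by a quadratic network with identity activation of the same architecture. -/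

import Mathlib

/-- An affine layer `x ↦ W x + b`. -/
def affineLayer {m d : ℕ} (W : Matrix (Fin d) (Fin m) ℝ) (b : Fin d → ℝ)
    (x : Fin m → ℝ) : Fin d → ℝ :=
  W.mulVec x + b

/-- A quadratic layer
`q(x) = (W^r x + b^r) ⊙ (W^g x + b^g) + W^b (x ⊙ x) + c`. -/
def quadLayer {m d : ℕ} (Wr Wg Wb : Matrix (Fin d) (Fin m) ℝ)
    (br bg c : Fin d → ℝ) (x : Fin m → ℝ) : Fin d → ℝ :=
  fun i => (Wr.mulVec x i + br i) * (Wg.mulVec x i + bg i)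
    + Wb.mulVec (fun j => x j * x j) i + c i

/-- The quadratic network with identity activation: `q_H ∘ q_{H−1} ∘ ⋯ ∘ q_1`. -/
def quadNetId (d : ℕ → ℕ)
    (Wr Wg Wb : ∀ h : ℕ, Matrix (Fin (d (h + 1))) (Fin (d h)) ℝ)
    (br bg c : ∀ h : ℕ, Fin (d (h + 1)) → ℝ) :
    ∀ H : ℕ, (Fin (d 0) → ℝ) → Fin (d H) → ℝ
  | 0 => fun x => x
  | H + 1 => fun x =>
      quadLayer (Wr H) (Wg H) (Wb H) (br H) (bg H) (c H)
        (quadNetId d Wr Wg Wb br bg c H x)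

/-- The stack `σ₁ ∘ l_H ∘ σ₁ ∘ ⋯ ∘ σ₁ ∘ l_1` where `σ₁` is componentwise squaring. -/
def sqStack (d : ℕ → ℕ)
    (W : ∀ h : ℕ, Matrix (Fin (d (h + 1))) (Fin (d h)) ℝ)
    (b : ∀ h : ℕ, Fin (d (h + 1)) → ℝ) :
    ∀ H : ℕ, (Fin (d 0) → ℝ) → Fin (d H) → ℝ
  | 0 => fun x => x
  | H + 1 => fun x => fun i => (affineLayer (W H) (b H) (sqStack d W b H x) i) ^ 2

/-- The conventional network with quadratic activation and architecture
`(d 0, …, d (H+1))`: `l_{H+1} ∘ σ₁ ∘ l_H ∘ σ₁ ∘ ⋯ ∘ σ₁ ∘ l_1`. -/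
def convSqNet (d : ℕ → ℕ)
    (W : ∀ h : ℕ, Matrix (Fin (d (h + 1))) (Fin (d h)) ℝ)
    (b : ∀ h : ℕ, Fin (d (h + 1)) → ℝ) (H : ℕ)
    (x : Fin (d 0) → ℝ) : Fin (d (H + 1)) → ℝ :=
  affineLayer (W H) (b H) (sqStack d W b H x)

/-! The gate factor of a quadratic layer can copy its first factor, which makes the layer
square an affine map, or be the constant `1`, which makes it affine. So every hidden layer
`σ₁ ∘ l_h` is the quadratic layer with `W^g = W^r = W^h`, and the output layer `l_H` is the one
with `W^g = 0`, `b^g = 1`; the squared-input and constant terms are never needed. -/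

theorem quadLayer_self_eq_sq {m n : ℕ} (W : Matrix (Fin n) (Fin m) ℝ) (b : Fin n → ℝ)
    (x : Fin m → ℝ) : quadLayer W W 0 b b 0 x = fun i => affineLayer W b x i ^ 2 := by
  funext i
  simp [quadLayer, affineLayer, sq]

theorem quadLayer_zero_one_eq_affineLayer {m n : ℕ} (W : Matrix (Fin n) (Fin m) ℝ)
    (b : Fin n → ℝ) (x : Fin m → ℝ) : quadLayer W 0 0 b 1 0 x = affineLayer W b x := by
  funext i
  simp [quadLayer, affineLayer]

theorem quadNetId_update_eq_sqStack (d : ℕ → ℕ) (H : ℕ)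
    (W : ∀ h : ℕ, Matrix (Fin (d (h + 1))) (Fin (d h)) ℝ)
    (b : ∀ h : ℕ, Fin (d (h + 1)) → ℝ) (x : Fin (d 0) → ℝ) :
    ∀ h ≤ H, quadNetId d W (Function.update W H 0) 0 b (Function.update b H 1) 0 h x =
      sqStack d W b h x
  | 0, _ => rfl
  | h + 1, hh => by
    have hne : h ≠ H := by omega
    simp only [quadNetId, Function.update_of_ne hne, Pi.zero_apply,
      quadNetId_update_eq_sqStack d H W b x h (by omega), quadLayer_self_eq_sq]
    rfl

/-- containment of function classes from Proposition 2: for every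
architecture and every choice of affine layers, there are quadratic layers (of the
same architecture) whose identity-activation composition equals the conventional
network with quadratic activation. -/
theorem stmt8 (d : ℕ → ℕ) (H : ℕ)
    (W : ∀ h : ℕ, Matrix (Fin (d (h + 1))) (Fin (d h)) ℝ)
    (b : ∀ h : ℕ, Fin (d (h + 1)) → ℝ) :
    ∃ (Wr Wg Wb : ∀ h : ℕ, Matrix (Fin (d (h + 1))) (Fin (d h)) ℝ)
      (br bg c : ∀ h : ℕ, Fin (d (h + 1)) → ℝ),
      ∀ x : Fin (d 0) → ℝ,
        quadNetId d Wr Wg Wb br bg c (H + 1) x = convSqNet d W b H x := by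
  refine ⟨W, Function.update W H 0, 0, b, Function.update b H 1, 0, fun x => ?_⟩
  simp only [quadNetId, Function.update_self, Pi.zero_apply,
    quadNetId_update_eq_sqStack d H W b x H le_rfl, quadLayer_zero_one_eq_affineLayer]
  rfl
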